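/- For the curve α(s) = ((sin s + s)/2, (cos s)/√2, (sin s - s)/2, c) in ℝ⁴ (c a constant), the tangent T(s) = α'(s) = (cos²(s/2), -(sin s)/√2, (cos s - 1)/2, 0) satisfies ‖T(s)‖ = 1 and ‖T'(s)‖ = 1/√2 for all s, i.e. the first Frenet curvature is the constant 1/√2. -/

import Mathlib

/-!
Differentiate componentwise: `α' = T` with `T = ((cos s + 1)/2, -sin s/√2, (cos s - 1)/2, 0)`
and `T' = (-sin s/2, -cos s/√2, -sin s/2, 0)`. Then `sin² + cos² = 1` gives `‖T‖² = 1` and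
`‖T'‖² = 1/2`, and `cos²(s/2) = (cos s + 1)/2` matches the first component of `T`.
-/

open Real WithLp Matrix

theorem HasDerivAt.matrixVecCons {𝕜 F : Type*} [NontriviallyNormedField 𝕜] [NormedAddCommGroup F]
    [NormedSpace 𝕜 F] {n : ℕ} {f : 𝕜 → F} {f' : F} {fs : 𝕜 → Fin n → F} {fs' : Fin n → F}
    {x : 𝕜} (hf : HasDerivAt f f' x) (hfs : HasDerivAt fs fs' x) :
    HasDerivAt (fun t => vecCons (f t) (fs t)) (vecCons f' fs') x :=
  hasDerivAt_pi.2 <| Fin.cases (by simpa using hf) fun i => by simpa using hasDerivAt_pi.1 hfs i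

theorem HasDerivAt.toLp {𝕜 ι : Type*} {E : ι → Type*} [NontriviallyNormedField 𝕜] [Fintype ι]
    [∀ i, NormedAddCommGroup (E i)] [∀ i, NormedSpace 𝕜 (E i)] (p : ENNReal) [Fact (1 ≤ p)]
    {f : 𝕜 → ∀ i, E i} {f' : ∀ i, E i} {x : 𝕜} (h : HasDerivAt f f' x) :
    HasDerivAt (fun t => toLp p (f t)) (toLp p f') x :=
  (PiLp.hasFDerivAt_toLp p (f x)).comp_hasDerivAt x h

theorem EuclideanSpace.norm_toLp_vecCons_four (a b c d : ℝ) :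
    ‖toLp 2 ![a, b, c, d]‖ = √(a ^ 2 + b ^ 2 + c ^ 2 + d ^ 2) := by
  simp [EuclideanSpace.norm_eq, Fin.sum_univ_four]

theorem Real.cos_half_sq (x : ℝ) : cos (x / 2) ^ 2 = (cos x + 1) / 2 := by
  rw [cos_sq, mul_div_cancel₀ x two_ne_zero]
  ring

namespace SolitonCurve

theorem hasDerivAt_curve (c s : ℝ) :
    HasDerivAt (fun s => toLp 2 ![(sin s + s) / 2, cos s / √2, (sin s - s) / 2, c])
      (toLp 2 ![(cos s + 1) / 2, -sin s / √2, (cos s - 1) / 2, 0]) s :=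
  HasDerivAt.toLp 2 <|
    (((hasDerivAt_sin s).add (hasDerivAt_id s)).div_const 2).matrixVecCons <|
    ((hasDerivAt_cos s).div_const _).matrixVecCons <|
    (((hasDerivAt_sin s).sub (hasDerivAt_id s)).div_const 2).matrixVecCons <|
    (hasDerivAt_const s c).matrixVecCons (hasDerivAt_pi.2 fun i => i.elim0)

theorem hasDerivAt_tangent (s : ℝ) :
    HasDerivAt (fun s => toLp 2 ![(cos s + 1) / 2, -sin s / √2, (cos s - 1) / 2, 0])
      (toLp 2 ![-sin s / 2, -cos s / √2, -sin s / 2, 0]) s :=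
  HasDerivAt.toLp 2 <|
    (((hasDerivAt_cos s).add_const 1).div_const 2).matrixVecCons <|
    ((hasDerivAt_sin s).neg.div_const _).matrixVecCons <|
    (((hasDerivAt_cos s).sub_const 1).div_const 2).matrixVecCons <|
    (hasDerivAt_const s (0 : ℝ)).matrixVecCons (hasDerivAt_pi.2 fun i => i.elim0)

theorem norm_tangent (s : ℝ) :
    ‖toLp 2 ![(cos s + 1) / 2, -sin s / √2, (cos s - 1) / 2, (0 : ℝ)]‖ = 1 := by
  rw [EuclideanSpace.norm_toLp_vecCons_four, sqrt_eq_one]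
  simp only [div_pow, neg_sq, sq_sqrt zero_le_two]
  linear_combination (1 / 2 : ℝ) * sin_sq_add_cos_sq s

theorem norm_deriv_tangent (s : ℝ) :
    ‖toLp 2 ![-sin s / 2, -cos s / √2, -sin s / 2, (0 : ℝ)]‖ = 1 / √2 := by
  rw [EuclideanSpace.norm_toLp_vecCons_four, one_div, ← sqrt_inv]
  congr 1
  simp only [div_pow, neg_sq, sq_sqrt zero_le_two]
  linear_combination (1 / 2 : ℝ) * sin_sq_add_cos_sq s

end SolitonCurve

theorem stmt18 (c : ℝ) (α : ℝ → EuclideanSpace ℝ (Fin 4))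
    (hα : α = fun s => (WithLp.equiv 2 (Fin 4 → ℝ)).symm
      ![(Real.sin s + s) / 2, Real.cos s / Real.sqrt 2, (Real.sin s - s) / 2, c]) :
    ∀ s : ℝ,
      deriv α s = (WithLp.equiv 2 (Fin 4 → ℝ)).symm
        ![Real.cos (s / 2) ^ 2, -Real.sin s / Real.sqrt 2, (Real.cos s - 1) / 2, 0] ∧
      ‖deriv α s‖ = 1 ∧ ‖deriv (deriv α) s‖ = 1 / Real.sqrt 2 := by
  subst hα
  simp only [WithLp.equiv_symm_apply]
  have hT : deriv (fun s => toLp 2 ![(sin s + s) / 2, cos s / √2, (sin s - s) / 2, c]) =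
      fun s => toLp 2 ![(cos s + 1) / 2, -sin s / √2, (cos s - 1) / 2, 0] :=
    funext fun s => (SolitonCurve.hasDerivAt_curve c s).deriv
  intro s
  rw [hT, (SolitonCurve.hasDerivAt_tangent s).deriv, cos_half_sq]
  exact ⟨rfl, SolitonCurve.norm_tangent s, SolitonCurve.norm_deriv_tangent s⟩
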